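/- arXiv:2112.10376 — 3 statements merged into one kernel-verified Lean document; each statement's English description precedes it below -/
import Mathlib

section
/- A nonempty string X has more than one position j ∈ [1,|X|] at which a lexicographically minimal rotation of X starts if and only if X is a power of some string, i.e., X = U^m for some string U and some integer m ≥ 2. -/
open scoped Classical

variable {α : Type*} [LinearOrder α]

/-- The rotation of `W` starting at the 1-based position `j`. -/
def rot (W : List α) (j : ℕ) : List α := W.drop (j - 1) ++ W.take (j - 1)

/-- The fragment `T[i..i+ℓ-1]` (1-based position `i`, length `ℓ`). -/
def frag (T : List α) (i ℓ : ℕ) : List α := (T.drop (i - 1)).take ℓ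

/-- The `m`-fold concatenation `U^m`. -/
def listPow (U : List α) (m : ℕ) : List α := (List.replicate m U).flatten

/-- A nonempty string is primitive if it is not a power `U^m` with `m ≥ 2`. -/
def Primitive (X : List α) : Prop :=
  X ≠ [] ∧ ∀ (U : List α) (m : ℕ), 2 ≤ m → X ≠ listPow U m

/-- `j ∈ [1,|X|]` is a position at which a lexicographically minimal rotation of `X` starts. -/
def IsMinRotPos (X : List α) (j : ℕ) : Prop :=
  j ∈ Finset.Icc 1 X.length ∧ ∀ k ∈ Finset.Icc 1 X.length, rot X j ≤ rot X k

/-- `j` is the bd-anchor of `X`: the smallest position of a lexicographically minimal rotation. -/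
def IsBdAnchor (X : List α) (j : ℕ) : Prop :=
  IsMinRotPos X j ∧ ∀ k, IsMinRotPos X k → j ≤ k

/-- The set `A_ℓ(T)` of order-`ℓ` bd-anchors of `T` (1-based absolute positions). -/
def bdAnchors (ℓ : ℕ) (T : List α) : Set ℕ :=
  { p | ∃ i ∈ Finset.Icc 1 (T.length - ℓ + 1), ∃ j, IsBdAnchor (frag T i ℓ) j ∧ p = i - 1 + j }

/-!
Two minimal rotations of `X`, starting at positions `j < k`, are equal, so `X` is fixed by the
rotation by `r = k - j`. Writing `X = uv` with `|u| = r`, this says `uv = vu`, and two commuting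
words are powers of a common word (Lyndon–Schützenberger). Conversely `U^m` is fixed by the
rotation by `|U|`, so next to any minimal-rotation position there is another one `|U|` apart,
and `m ≥ 2` leaves room for it in `[1, m|U|]`.
-/

section Words

variable {β : Type*}

lemma listPow_one (U : List β) : listPow U 1 = U := by simp [listPow]

lemma listPow_succ (U : List β) (m : ℕ) : listPow U (m + 1) = listPow U m ++ U := by
  simp [listPow, List.replicate_succ']

lemma listPow_succ' (U : List β) (m : ℕ) : listPow U (m + 1) = U ++ listPow U m := by
  simp [listPow, List.replicate_succ]

lemma listPow_add (U : List β) (p q : ℕ) :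
    listPow U (p + q) = listPow U p ++ listPow U q := by
  simp only [listPow, List.replicate_add, List.flatten_append]

@[simp]
lemma length_listPow (U : List β) (m : ℕ) : (listPow U m).length = m * U.length := by
  simp [listPow]

lemma exists_listPow_of_append_comm {A B : List β} (h : A ++ B = B ++ A) :
    ∃ (U : List β) (p q : ℕ), A = listPow U p ∧ B = listPow U q := by
  rcases eq_or_ne A [] with rfl | hA
  · exact ⟨B, 0, 1, rfl, (listPow_one B).symm⟩
  rcases eq_or_ne B [] with rfl | hB
  · exact ⟨A, 1, 0, (listPow_one A).symm, rfl⟩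
  rcases List.append_eq_append_iff.mp h with ⟨C, hB, hC⟩ | ⟨C, hA', hC⟩
  · obtain ⟨U, p, q, rfl, rfl⟩ := exists_listPow_of_append_comm (hB.symm.trans hC)
    exact ⟨U, p, p + q, rfl, hB.trans (listPow_add U p q).symm⟩
  · obtain ⟨U, p, q, rfl, rfl⟩ := exists_listPow_of_append_comm (hA'.symm.trans hC)
    exact ⟨U, p + q, p, hA'.trans (listPow_add U p q).symm, rfl⟩
termination_by A.length + B.length
decreasing_by
  · have := List.length_pos_iff.mpr hA; simp only [hB, List.length_append]; omega
  · have := List.length_pos_iff.mpr hB; simp only [hA', List.length_append]; omega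

lemma exists_listPow_of_rotate_eq_self {X : List β} {r : ℕ} (hr : 0 < r) (hrX : r < X.length)
    (h : X.rotate r = X) : ∃ (U : List β) (m : ℕ), 2 ≤ m ∧ X = listPow U m := by
  have hcomm : X.take r ++ X.drop r = X.drop r ++ X.take r := by
    rw [List.take_append_drop, ← List.rotate_eq_drop_append_take hrX.le, h]
  obtain ⟨U, p, q, hp, hq⟩ := exists_listPow_of_append_comm hcomm
  have hpr := congrArg List.length hp
  have hqr := congrArg List.length hq
  simp only [List.length_take, List.length_drop, length_listPow] at hpr hqr
  have hp0 : p ≠ 0 := by rintro rfl; omega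
  have hq0 : q ≠ 0 := by rintro rfl; omega
  exact ⟨U, p + q, by omega, by rw [listPow_add, ← hp, ← hq, List.take_append_drop]⟩

lemma rotate_listPow_length (U : List β) (m : ℕ) :
    (listPow U m).rotate U.length = listPow U m := by
  cases m with
  | zero => rfl
  | succ m =>
    calc (listPow U (m + 1)).rotate U.length = (U ++ listPow U m).rotate U.length := by
          rw [listPow_succ']
      _ = listPow U m ++ U := List.rotate_append_length_eq U _
      _ = listPow U (m + 1) := (listPow_succ U m).symm

lemma List.rotate_eq_self_of_rotate_eq_rotate {X : List β} {a b : ℕ} (hab : a ≤ b)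
    (h : X.rotate a = X.rotate b) : X.rotate (b - a) = X := by
  rw [← Nat.sub_add_cancel hab, ← List.rotate_rotate] at h
  exact (List.rotate_eq_rotate.mp h).symm

lemma List.rotate_add_of_rotate_eq_self {X : List β} {p : ℕ} (h : X.rotate p = X) (n : ℕ) :
    X.rotate (p + n) = X.rotate n := by
  rw [← List.rotate_rotate, h]

lemma rot_eq_rotate {X : List β} {j : ℕ} (hj : j ≤ X.length) : rot X j = X.rotate (j - 1) := by
  rw [List.rotate_eq_drop_append_take (by omega), rot]

end Words

section IsMinRotPos

variable {X : List α} {j k : ℕ}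

lemma IsMinRotPos.rot_eq (hj : IsMinRotPos X j) (hk : IsMinRotPos X k) : rot X j = rot X k :=
  le_antisymm (hj.2 k hk.1) (hk.2 j hj.1)

lemma IsMinRotPos.of_rot_eq (hj : IsMinRotPos X j) (hk : k ∈ Finset.Icc 1 X.length)
    (h : rot X k = rot X j) : IsMinRotPos X k :=
  ⟨hk, fun i hi => h ▸ hj.2 i hi⟩

lemma exists_isMinRotPos (hX : X ≠ []) : ∃ j, IsMinRotPos X j := by
  obtain ⟨j, hj, hmin⟩ := Finset.exists_min_image (Finset.Icc 1 X.length) (rot X)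
    ⟨1, Finset.mem_Icc.mpr ⟨le_rfl, List.length_pos_iff.mpr hX⟩⟩
  exact ⟨j, hj, hmin⟩

lemma exists_listPow_of_isMinRotPos_of_lt (hj : IsMinRotPos X j) (hk : IsMinRotPos X k)
    (hjk : j < k) : ∃ (U : List α) (m : ℕ), 2 ≤ m ∧ X = listPow U m := by
  obtain ⟨hj1, hjX⟩ := Finset.mem_Icc.mp hj.1
  obtain ⟨hk1, hkX⟩ := Finset.mem_Icc.mp hk.1
  have hrot : X.rotate (j - 1) = X.rotate (k - 1) := by
    rw [← rot_eq_rotate hjX, ← rot_eq_rotate hkX, hj.rot_eq hk]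
  exact exists_listPow_of_rotate_eq_self (by omega) (by omega)
    (List.rotate_eq_self_of_rotate_eq_rotate (by omega) hrot)

lemma exists_ne_isMinRotPos_of_rotate_eq_self {p : ℕ} (hp : 0 < p) (hpX : 2 * p ≤ X.length)
    (hrot : X.rotate p = X) (hj : IsMinRotPos X j) : ∃ k, k ≠ j ∧ IsMinRotPos X k := by
  obtain ⟨hj1, hjX⟩ := Finset.mem_Icc.mp hj.1
  by_cases hfwd : j + p ≤ X.length
  · refine ⟨j + p, by omega, hj.of_rot_eq (Finset.mem_Icc.mpr ⟨by omega, hfwd⟩) ?_⟩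
    rw [rot_eq_rotate hfwd, rot_eq_rotate hjX, ← List.rotate_add_of_rotate_eq_self hrot (j - 1)]
    congr 1
    omega
  · refine ⟨j - p, by omega, hj.of_rot_eq (Finset.mem_Icc.mpr ⟨by omega, by omega⟩) ?_⟩
    rw [rot_eq_rotate (by omega), rot_eq_rotate hjX,
      ← List.rotate_add_of_rotate_eq_self hrot (j - p - 1)]
    congr 1
    omega

end IsMinRotPos

/-- A nonempty string `X` has more than one position `j ∈ [1,|X|]` at which a
lexicographically minimal rotation of `X` starts iff `X` is a power `U^m` with `m ≥ 2`. -/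
theorem more_than_one_min_rotation_iff_power (X : List α) (hX : X ≠ []) :
    (∃ j k, j ≠ k ∧ IsMinRotPos X j ∧ IsMinRotPos X k) ↔
      ∃ (U : List α) (m : ℕ), 2 ≤ m ∧ X = listPow U m := by
  constructor
  · rintro ⟨j, k, hjk, hj, hk⟩
    rcases hjk.lt_or_gt with hlt | hgt
    · exact exists_listPow_of_isMinRotPos_of_lt hj hk hlt
    · exact exists_listPow_of_isMinRotPos_of_lt hk hj hgt
  · rintro ⟨U, m, hm, rfl⟩
    have hU : 0 < U.length := List.length_pos_iff.mpr (by rintro rfl; simp [listPow] at hX)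
    obtain ⟨j, hj⟩ := exists_isMinRotPos hX
    obtain ⟨k, hkj, hk⟩ := exists_ne_isMinRotPos_of_rotate_eq_self hU
      (by rw [length_listPow]; exact Nat.mul_le_mul_right _ hm) (rotate_listPow_length U m) hj
    exact ⟨k, j, hkj, hk, hj⟩
end

section
/- Let X be a nonempty string of length n over Σ and let # ∈ Σ be a letter that does not occur in X and is strictly greater than every letter occurring in X. Set Y = XX# (the concatenation of two copies of X followed by #), a string of length 2n+1. If Y[i..2n+1] is the lexicographically minimal suffix of Y, then i ∈ [1,n] and i is the leftmost position at which a lexicographically minimal rotation of X starts. -/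
open scoped Classical

variable {α : Type*} [LinearOrder α]

/-!
Every suffix of `Y = XX#` starting in the first copy of `X` begins with a rotation of `X`
(of length `n`), so comparing these suffixes compares rotations first; among equal
rotations, the suffix starting further left is smaller, since it continues the common
rotation with a letter of `X` where the other one already reads `#`. A suffix starting in
the second copy, `X[j..n]#`, loses against `X[j..n]XX#` for the same reason.
-/

namespace List

variable {β : Type*} [LT β]

theorem append_lt_append_of_length_eq {s t : List β} (hlen : s.length = t.length)
    (hst : s < t) (u v : List β) : s ++ u < t ++ v := by
  induction s generalizing t with
  | nil => cases t <;> simp_all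
  | cons a s ih =>
    cases t with
    | nil => simp at hlen
    | cons b t =>
      rcases cons_lt_cons_iff.1 hst with hab | ⟨rfl, hst'⟩
      · exact Lex.rel hab
      · exact Lex.cons (ih (by simpa using hlen) hst')

theorem append_lt_append_singleton_of_prefix {s t : List β} {h : β} (hst : s <+: t)
    (hlen : s.length < t.length) (hlt : ∀ a ∈ t, a < h) (u : List β) :
    t ++ u < s ++ [h] := by
  obtain ⟨r, rfl⟩ := hst
  cases r with
  | nil => simp at hlen
  | cons a r =>
    rw [append_assoc, cons_append]
    exact append_left_lt (Lex.rel (hlt a (by simp)))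

end List

section Rotation

variable {β : Type*}

theorem length_rot (X : List β) (j : ℕ) : (rot X j).length = X.length := by
  simp only [rot, List.length_append, List.length_drop, List.length_take]
  omega

theorem drop_append_append_eq_rot_append {X : List β} {k : ℕ} (hk : k ≤ X.length)
    (w : List β) : (X ++ X ++ w).drop (k - 1) = rot X k ++ (X.drop (k - 1) ++ w) := by
  rw [List.append_assoc, List.drop_append_of_le_length (by omega), rot, List.append_assoc,
    ← List.append_assoc (X.take _), List.take_append_drop]

theorem drop_append_append_of_length_le {X : List β} {j : ℕ} (h₁ : X.length ≤ j)
    (h₂ : j ≤ 2 * X.length) (w : List β) :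
    (X ++ X ++ w).drop j = X.drop (j - X.length) ++ w := by
  rw [List.append_assoc, List.drop_append, List.drop_eq_nil_of_le h₁, List.nil_append,
    List.drop_append_of_le_length (by omega)]

theorem drop_isPrefix_drop_of_rot_eq {X : List β} {k i : ℕ} (hki : k ≤ i)
    (hrot : rot X k = rot X i) : X.drop (i - 1) <+: X.drop (k - 1) :=
  List.prefix_of_prefix_length_le (l₃ := rot X k) (by rw [hrot]; exact List.prefix_append _ _)
    (List.prefix_append _ _)
    (by simp only [List.length_drop]; omega)

theorem drop_append_singleton_lt_of_rot_eq [LT β] {X : List β} {h : β}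
    (hmax : ∀ a ∈ X, a < h) {k i : ℕ} (hk : 1 ≤ k) (hki : k < i) (hi : i ≤ X.length)
    (hrot : rot X k = rot X i) : X.drop (k - 1) ++ [h] < X.drop (i - 1) ++ [h] := by
  refine List.append_lt_append_singleton_of_prefix (drop_isPrefix_drop_of_rot_eq hki.le hrot) ?_
    (fun a ha => hmax a (List.mem_of_mem_drop ha)) _
  simp only [List.length_drop]
  omega

theorem drop_append_append_singleton_lt_of_length_le [LT β] {X : List β} (hX : X ≠ []) {h : β}
    (hmax : ∀ a ∈ X, a < h) {j : ℕ} (h₁ : X.length ≤ j) (h₂ : j ≤ 2 * X.length) :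
    (X ++ X ++ [h]).drop (j - X.length) < (X ++ X ++ [h]).drop j := by
  rw [drop_append_append_of_length_le h₁ h₂, List.append_assoc,
    List.drop_append_of_le_length (by omega), ← List.append_assoc]
  refine List.append_lt_append_singleton_of_prefix (List.prefix_append _ _) ?_ ?_ _
  · simpa using List.length_pos_iff.2 hX
  · exact fun a ha => hmax a ((List.mem_append.1 ha).elim List.mem_of_mem_drop id)

end Rotation

theorem min_suffix_gives_bd_anchor_general (X : List α) (hX : X ≠ []) (hash : α)
    (hmax : ∀ a ∈ X, a < hash)
    (Y : List α) (hY : Y = X ++ X ++ [hash])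
    (i : ℕ) (hi : i ∈ Finset.Icc 1 (2 * X.length + 1))
    (hmin : ∀ k ∈ Finset.Icc 1 (2 * X.length + 1), Y.drop (i - 1) ≤ Y.drop (k - 1)) :
    i ∈ Finset.Icc 1 X.length ∧ IsBdAnchor X i := by
  subst hY
  obtain ⟨hi1, hi2⟩ := Finset.mem_Icc.1 hi
  have hin : i ≤ X.length := by
    by_contra! hni
    have hlt := drop_append_append_singleton_lt_of_length_le hX hmax
      (j := i - 1) (by omega) (by omega)
    rw [show i - 1 - X.length = i - X.length - 1 by omega] at hlt
    exact (hmin (i - X.length) (Finset.mem_Icc.2 ⟨by omega, by omega⟩)).not_gt hlt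
  have hiX : i ∈ Finset.Icc 1 X.length := Finset.mem_Icc.2 ⟨hi1, hin⟩
  have hsuf : ∀ k ∈ Finset.Icc 1 X.length,
      rot X i ++ (X.drop (i - 1) ++ [hash]) ≤ rot X k ++ (X.drop (k - 1) ++ [hash]) := by
    intro k hk
    have hk' := Finset.mem_Icc.1 hk
    simpa only [drop_append_append_eq_rot_append hin, drop_append_append_eq_rot_append hk'.2]
      using hmin k (Finset.mem_Icc.2 ⟨hk'.1, by omega⟩)
  have hrot : IsMinRotPos X i := ⟨hiX, fun k hk => le_of_not_gt fun hlt =>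
    (hsuf k hk).not_gt (List.append_lt_append_of_length_eq (by simp only [length_rot]) hlt _ _)⟩
  refine ⟨hiX, hrot, fun k hk => le_of_not_gt fun hki => (hsuf k hk.1).not_gt ?_⟩
  have heq : rot X k = rot X i := le_antisymm (hk.2 i hiX) (hrot.2 k hk.1)
  rw [heq]
  exact List.append_left_lt
    (drop_append_singleton_lt_of_rot_eq hmax (Finset.mem_Icc.1 hk.1).1 hki hin heq)

/-- Let `X` be a nonempty string of length `n`, `#` a letter not occurring in
`X` and strictly greater than every letter of `X`, and `Y = XX#`. If `Y[i..2n+1]` is the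
lexicographically minimal suffix of `Y` then `i ∈ [1,n]` and `i` is the leftmost position
of a lexicographically minimal rotation of `X`, i.e. the bd-anchor of `X`. -/
theorem min_suffix_gives_bd_anchor (X : List α) (hX : X ≠ []) (hash : α)
    (hnotin : hash ∉ X) (hmax : ∀ a ∈ X, a < hash)
    (Y : List α) (hY : Y = X ++ X ++ [hash])
    (i : ℕ) (hi : i ∈ Finset.Icc 1 (2 * X.length + 1))
    (hmin : ∀ k ∈ Finset.Icc 1 (2 * X.length + 1), Y.drop (i - 1) ≤ Y.drop (k - 1)) :
    i ∈ Finset.Icc 1 X.length ∧ IsBdAnchor X i :=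
  min_suffix_gives_bd_anchor_general X hX hash hmax Y hY i hi hmin
end

section
/- Let T be a string of length n over Σ, let ℓ > 0 be an integer, and let Q be a string with ℓ ≤ |Q| ≤ n. Let j ∈ [1,ℓ] be the bd-anchor of Q[1..ℓ]. Then for every position p ∈ [1, n−|Q|+1], Q occurs at position p in T (i.e., T[p..p+|Q|−1] = Q) if and only if p+j−1 ∈ A_ℓ(T), T[p..p+j−1] = Q[1..j], and T[p+j−1..p+|Q|−1] = Q[j..|Q|]. -/
open scoped Classical

variable {α : Type*} [LinearOrder α]

/-! An occurrence of `Q` at `p` amounts to occurrences of its halves `Q[1..j]` at `p` and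
`Q[j..|Q|]` at `p+j-1`, which overlap in the anchor letter. The condition `p+j-1 ∈ A_ℓ(T)` comes
for free: the length-`ℓ` window of `T` at `p` is `Q[1..ℓ]`, whose bd-anchor is `j`. -/

theorem List.take_length_eq_iff_take_and_drop_pred {β : Type*} {L Q : List β} {j : ℕ}
    (hj : 1 ≤ j) (hjQ : j ≤ Q.length) :
    L.take Q.length = Q ↔
      L.take j = Q.take j ∧ (L.drop (j - 1)).take (Q.length - (j - 1)) = Q.drop (j - 1) := by
  constructor
  · intro h
    refine ⟨?_, ?_⟩
    · rw [← h, List.take_take, Nat.min_eq_left hjQ]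
    · rw [← List.drop_take, h]
  · rintro ⟨hpre, hsuf⟩
    have hpre' : L.take (j - 1) = Q.take (j - 1) := by
      have := congrArg (List.take (j - 1)) hpre
      rwa [List.take_take, List.take_take, Nat.min_eq_left (Nat.sub_le j 1)] at this
    calc L.take Q.length
        = L.take ((j - 1) + (Q.length - (j - 1))) := by congr 1; omega
      _ = L.take (j - 1) ++ (L.drop (j - 1)).take (Q.length - (j - 1)) := List.take_add ..
      _ = Q := by rw [hpre', hsuf, List.take_append_drop]

theorem frag_one {β : Type*} (Q : List β) (m : ℕ) : frag Q 1 m = Q.take m := rfl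

theorem frag_add_sub_one {β : Type*} (T : List β) {p j : ℕ} (hp : 1 ≤ p) (hj : 1 ≤ j) (m : ℕ) :
    frag T (p + j - 1) m = ((T.drop (p - 1)).drop (j - 1)).take m := by
  rw [frag, List.drop_drop]
  congr 2
  omega

theorem frag_eq_drop_pred {β : Type*} (Q : List β) {j : ℕ} (hj : 1 ≤ j) :
    frag Q j (Q.length - j + 1) = Q.drop (j - 1) :=
  List.take_of_length_le (by simp; omega)

theorem frag_eq_take_of_frag_eq {β : Type*} {T Q : List β} {p m k : ℕ} (h : frag T p m = Q)
    (hk : k ≤ m) :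
    frag T p k = Q.take k := by
  rw [← h, frag, frag, List.take_take, Nat.min_eq_left hk]

theorem mem_bdAnchors_of_isBdAnchor {T : List α} {ℓ p j : ℕ}
    (hp : p ∈ Finset.Icc 1 (T.length - ℓ + 1)) (hj : IsBdAnchor (frag T p ℓ) j) :
    p + j - 1 ∈ bdAnchors ℓ T :=
  ⟨p, hp, j, hj, by have := (Finset.mem_Icc.mp hp).1; omega⟩

theorem occurrence_iff_bd_anchor_hit_general (T Q : List α) (ℓ : ℕ)
    (hQℓ : ℓ ≤ Q.length)
    (j : ℕ) (hj : IsBdAnchor (frag Q 1 ℓ) j)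
    (p : ℕ) (hp : p ∈ Finset.Icc 1 (T.length - Q.length + 1)) :
    frag T p Q.length = Q ↔
      p + j - 1 ∈ bdAnchors ℓ T ∧
        frag T p j = frag Q 1 j ∧
        frag T (p + j - 1) (Q.length - j + 1) = frag Q j (Q.length - j + 1) := by
  have hjℓ : j ∈ Finset.Icc 1 ℓ := by
    simpa [frag, Nat.min_eq_left hQℓ] using hj.1.1
  rw [Finset.mem_Icc] at hjℓ hp
  have hsplit := List.take_length_eq_iff_take_and_drop_pred (L := T.drop (p - 1)) hjℓ.1
    (hjℓ.2.trans hQℓ)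
  rw [frag_add_sub_one T hp.1 hjℓ.1, frag_eq_drop_pred Q hjℓ.1, frag_one,
    show Q.length - j + 1 = Q.length - (j - 1) by omega]
  refine ⟨fun hocc => ⟨?_, hsplit.mp hocc⟩, fun ⟨_, hpre, hsuf⟩ => hsplit.mpr ⟨hpre, hsuf⟩⟩
  refine mem_bdAnchors_of_isBdAnchor (Finset.mem_Icc.mpr ⟨hp.1, by omega⟩) ?_
  rwa [frag_eq_take_of_frag_eq hocc hQℓ]

/-- Let `T` have length `n`, `ℓ > 0`, `Q` a pattern with `ℓ ≤ |Q| ≤ n`, and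
`j` the bd-anchor of `Q[1..ℓ]`. Then for every `p ∈ [1, n-|Q|+1]`, `Q` occurs at position
`p` in `T` iff `p+j-1 ∈ A_ℓ(T)`, `T[p..p+j-1] = Q[1..j]`, and
`T[p+j-1..p+|Q|-1] = Q[j..|Q|]`. -/
theorem occurrence_iff_bd_anchor_hit (T Q : List α) (ℓ : ℕ) (hℓ : 0 < ℓ)
    (hQℓ : ℓ ≤ Q.length) (hQT : Q.length ≤ T.length)
    (j : ℕ) (hj : IsBdAnchor (frag Q 1 ℓ) j)
    (p : ℕ) (hp : p ∈ Finset.Icc 1 (T.length - Q.length + 1)) :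
    frag T p Q.length = Q ↔
      p + j - 1 ∈ bdAnchors ℓ T ∧
        frag T p j = frag Q 1 j ∧
        frag T (p + j - 1) (Q.length - j + 1) = frag Q j (Q.length - j + 1) :=
  occurrence_iff_bd_anchor_hit_general T Q ℓ hQℓ j hj p hp
end
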